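/- arXiv:1205.6627 — 2 statements merged into one kernel-verified Lean document; each statement's English description precedes it below -/
import Mathlib

section
/- Let Y and Z be disjoint subsets of X, let α : Y → R satisfy α y ≠ 0 for all y ∈ Y, and let γ : Z → R. If ⁅Σ_{y∈Y} α y • ι y, Σ_{z∈Z} γ z • ι z⁆ = 0 in L, then for every z ∈ Z with γ z ≠ 0 and every y ∈ Y one has Adj y z. -/
/-! If `y` and `z` are not adjacent, then for any elements `A`, `B` of any Lie algebra the
assignment `ι y ↦ A`, `ι z ↦ B`, `ι x ↦ 0` otherwise kills every defining relation, since the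
generators with nonzero image form an independent set; so it defines a Lie homomorphism on `L`.
Applied to the vanishing bracket it gives `(α y * γ z) • ⁅A, B⁆ = 0`. Choosing `A`, `B` in the
Heisenberg algebra with `⁅A, B⁆ ≠ 0` forces `α y * γ z = 0`, impossible in a domain. -/

noncomputable section

/-- The Lie ideal of relations of the partially commutative Lie algebra:
it is generated by the brackets `⁅x, y⁆` of generators with `G.Adj x y`. -/
def pcIdeal (R : Type*) [CommRing R] {X : Type*} (G : SimpleGraph X) :
    LieIdeal R (FreeLieAlgebra R X) :=
  LieSubmodule.lieSpan R (FreeLieAlgebra R X)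
    {w | ∃ x y : X, G.Adj x y ∧ w = ⁅FreeLieAlgebra.of R x, FreeLieAlgebra.of R y⁆}

/-- The partially commutative Lie algebra `L_R(X; G)`. -/
abbrev PCLieAlgebra (R : Type*) [CommRing R] (X : Type*) (G : SimpleGraph X) :=
  FreeLieAlgebra R X ⧸ pcIdeal R G

/-- The canonical image `ι x` of a generator `x : X` in `L_R(X; G)`. -/
def pcGen (R : Type*) [CommRing R] {X : Type*} (G : SimpleGraph X) (x : X) :
    PCLieAlgebra R X G :=
  LieSubmodule.Quotient.mk (N := pcIdeal R G) (FreeLieAlgebra.of R x)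

/-- The Lie `R`-subalgebra `⟨Y⟩` of `L_R(X; G)` generated by `{ι y : y ∈ Y}`. -/
def genSpan (R : Type*) [CommRing R] {X : Type*} (G : SimpleGraph X) (Y : Set X) :
    LieSubalgebra R (PCLieAlgebra R X G) :=
  LieSubalgebra.lieSpan R (PCLieAlgebra R X G) (pcGen R G '' Y)

/-- The complement graph on a subset `Y ⊆ X`: distinct vertices of `Y` are adjacent
iff they are not adjacent in `G`. -/
def complOn {X : Type*} (G : SimpleGraph X) (Y : Set X) : SimpleGraph Y where
  Adj a b := (a : X) ≠ (b : X) ∧ ¬ G.Adj a b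
  symm := ⟨fun _ _ h => ⟨fun e => h.1 e.symm, fun e => h.2 (G.symm.symm _ _ e)⟩⟩
  loopless := ⟨fun _ h => h.1 rfl⟩

/-- The vertex set (as a subset of `X`) of a connected component of the
complement graph on `Y`. -/
def compSet {X : Type*} (G : SimpleGraph X) (Y : Set X)
    (c : (complOn G Y).ConnectedComponent) : Set X :=
  {x : X | ∃ hx : x ∈ Y, (complOn G Y).connectedComponentMk ⟨x, hx⟩ = c}

/-- `Y` is the support of `g`: `g ∈ ⟨Y⟩`, and `Y ⊆ Z` whenever `g ∈ ⟨Z⟩`. -/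
def isSupport (R : Type*) [CommRing R] {X : Type*} (G : SimpleGraph X)
    (g : PCLieAlgebra R X G) (Y : Set X) : Prop :=
  g ∈ genSpan R G Y ∧ ∀ Z : Set X, g ∈ genSpan R G Z → Y ⊆ Z

theorem Finset.sum_smul_pi_single' {ι S M : Type*} [DecidableEq ι] [Monoid S] [AddCommMonoid M]
    [DistribMulAction S M] (i : ι) (x : M) (s : Finset ι) (c : ι → S) :
    ∑ a ∈ s, c a • Pi.single i x a = if i ∈ s then c i • x else 0 := by
  simp_rw [Pi.single_apply, smul_ite, smul_zero, Finset.sum_ite_eq']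

theorem SimpleGraph.lie_eq_zero_of_isIndepSet_support {X L : Type*} [LieRing L]
    {G : SimpleGraph X} {f : X → L} (hf : G.IsIndepSet (Function.support f)) ⦃x y : X⦄
    (hxy : G.Adj x y) : ⁅f x, f y⁆ = 0 := by
  by_cases hx : f x = 0
  · simp [hx]
  by_cases hy : f y = 0
  · simp [hy]
  exact absurd hxy (hf hx hy hxy.ne)

theorem SimpleGraph.isIndepSet_support_pi_single_add_pi_single {X M : Type*} [DecidableEq X]
    [AddZeroClass M] {G : SimpleGraph X} {y z : X} (h : ¬G.Adj y z) (A B : M) :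
    G.IsIndepSet (Function.support (Pi.single y A + Pi.single z B : X → M)) := by
  have hpair : G.IsIndepSet {y, z} := Set.pairwise_pair.mpr fun _ => ⟨h, fun h' => h h'.symm⟩
  refine hpair.mono ((Function.support_add _ _).trans (Set.union_subset ?_ ?_))
  · exact Pi.support_single_subset.trans (by simp)
  · exact Pi.support_single_subset.trans (by simp)

section PCLieAlgebra

variable {R : Type*} [CommRing R] {X : Type*} {G : SimpleGraph X}
  {L : Type*} [LieRing L] [LieAlgebra R L]

theorem pcIdeal_le_ker_lift {f : X → L} (hf : ∀ ⦃x y⦄, G.Adj x y → ⁅f x, f y⁆ = 0) :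
    pcIdeal R G ≤ (FreeLieAlgebra.lift R f).ker := by
  rw [pcIdeal, LieSubmodule.lieSpan_le]
  rintro _ ⟨x, y, hxy, rfl⟩
  simp [hf hxy]

def pcLift (f : X → L) (hf : ∀ ⦃x y⦄, G.Adj x y → ⁅f x, f y⁆ = 0) :
    PCLieAlgebra R X G →ₗ⁅R⁆ L :=
  { (pcIdeal R G).toSubmodule.liftQ (FreeLieAlgebra.lift R f : _ →ₗ[R] L)
      (pcIdeal_le_ker_lift hf) with
    map_lie' := by
      rintro ⟨a⟩ ⟨b⟩
      exact (FreeLieAlgebra.lift R f).map_lie a b }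

theorem pcLift_pcGen {f : X → L} (hf : ∀ ⦃x y⦄, G.Adj x y → ⁅f x, f y⁆ = 0) (x : X) :
    pcLift f hf (pcGen R G x) = f x :=
  FreeLieAlgebra.lift_of_apply f x

theorem pcLift_sum_smul_pcGen {f : X → L} (hf : ∀ ⦃x y⦄, G.Adj x y → ⁅f x, f y⁆ = 0)
    (s : Finset X) (c : X → R) :
    pcLift f hf (∑ a ∈ s, c a • pcGen R G a) = ∑ a ∈ s, c a • f a := by
  simp [pcLift_pcGen]

theorem smul_lie_eq_zero_of_not_adj {Y Z : Finset X} (hYZ : Disjoint Y Z) {α γ : X → R}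
    (hbr : ⁅∑ y ∈ Y, α y • pcGen R G y, ∑ z ∈ Z, γ z • pcGen R G z⁆ = 0)
    {y z : X} (hy : y ∈ Y) (hz : z ∈ Z) (hyz : ¬G.Adj y z) (A B : L) :
    (α y * γ z) • ⁅A, B⁆ = 0 := by
  classical
  have hf := G.lie_eq_zero_of_isIndepSet_support
    (G.isIndepSet_support_pi_single_add_pi_single hyz A B)
  have hYsum : ∑ a ∈ Y, α a • (Pi.single y A + Pi.single z B : X → L) a = α y • A := by
    simp [smul_add, Finset.sum_add_distrib, Finset.sum_smul_pi_single', hy,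
      Finset.disjoint_right.mp hYZ hz]
  have hZsum : ∑ a ∈ Z, γ a • (Pi.single y A + Pi.single z B : X → L) a = γ z • B := by
    simp [smul_add, Finset.sum_add_distrib, Finset.sum_smul_pi_single', hz,
      Finset.disjoint_left.mp hYZ hy]
  have h := congrArg (pcLift _ hf) hbr
  rwa [LieHom.map_lie, pcLift_sum_smul_pcGen, pcLift_sum_smul_pcGen, hYsum, hZsum, smul_lie,
    lie_smul, smul_smul, map_zero] at h

end PCLieAlgebra

theorem adj_of_bracket_lin_comb_disjoint_general
    (R : Type*) [CommRing R] [IsDomain R] (X : Type*) (G : SimpleGraph X)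
    (Y Z : Finset X) (hYZ : Disjoint Y Z) (α γ : X → R)
    (hα : ∀ y ∈ Y, α y ≠ 0)
    (hbr : ⁅∑ y ∈ Y, α y • pcGen R G y, ∑ z ∈ Z, γ z • pcGen R G z⁆ = 0) :
    ∀ z ∈ Z, γ z ≠ 0 → ∀ y ∈ Y, G.Adj y z := by
  intro z hz hγ y hy
  by_contra hyz
  let _ := LieRing.ofAssociativeRing (A := Matrix (Fin 3) (Fin 3) R)
  -- In the Heisenberg algebra, `⁅E₀₁, E₁₂⁆ = E₀₂` has entry `1` at `(0, 2)`.
  have h := smul_lie_eq_zero_of_not_adj hYZ hbr hy hz hyz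
    (Matrix.single 0 1 1 : Matrix (Fin 3) (Fin 3) R) (Matrix.single 1 2 1)
  have hcoeff : α y = 0 ∨ γ z = 0 := by
    simpa [Ring.lie_def] using congrFun (congrFun h 0) 2
  exact hcoeff.elim (hα y hy) hγ

/-- If `Y` and `Z` are disjoint and `⁅Σ_{y∈Y} α y • ι y, Σ_{z∈Z} γ z • ι z⁆ = 0`
with all `α y ≠ 0` on `Y`, then every `z ∈ Z` occurring with nonzero coefficient is
adjacent to every `y ∈ Y`. -/
theorem adj_of_bracket_lin_comb_disjoint
    (R : Type*) [CommRing R] [IsDomain R] (X : Type*) [Fintype X] (G : SimpleGraph X)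
    (Y Z : Finset X) (hYZ : Disjoint Y Z) (α γ : X → R)
    (hα : ∀ y ∈ Y, α y ≠ 0)
    (hbr : ⁅∑ y ∈ Y, α y • pcGen R G y, ∑ z ∈ Z, γ z • pcGen R G z⁆ = 0) :
    ∀ z ∈ Z, γ z ≠ 0 → ∀ y ∈ Y, G.Adj y z :=
  adj_of_bracket_lin_comb_disjoint_general R X G Y Z hYZ α γ hα hbr
end
end

section
/- Let g ∈ L and suppose Y ⊆ X is the support of g, i.e. g ∈ ⟨Y⟩ and Y ⊆ Z for every Z ⊆ X with g ∈ ⟨Z⟩. Let C_1, …, C_p be the connected components of the complement graph on Y. Then there exist elements g_1, …, g_p of L such that g = Σ_{i=1}^p g_i, each g_i lies in the Lie subalgebra ⟨C_i⟩, and C_i is the support of g_i (i.e. g_i ∈ ⟨C_i⟩ and C_i ⊆ Z for every Z ⊆ X with g_i ∈ ⟨Z⟩). -/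
noncomputable section

/-!
Vertices lying in different components of the complement graph on `Y` are adjacent in `G`, so
their generators commute, and hence so do the subalgebras `⟨Cᵢ⟩`. The sum of the underlying
submodules of pairwise commuting subalgebras is already closed under the bracket, so
`⟨Y⟩ = Σᵢ ⟨Cᵢ⟩` as modules and `g = Σᵢ gᵢ` with `gᵢ ∈ ⟨Cᵢ⟩`. If `gᵢ ∈ ⟨Z⟩`, then
`g ∈ ⟨Z ∪ (Y \ Cᵢ)⟩`, and minimality of the support `Y` forces `Cᵢ ⊆ Z`.
-/

section PairwiseCommuting

variable {R L : Type*} [CommRing R] [LieRing L] [LieAlgebra R L]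

lemma lie_eq_zero_of_mem_lieSpan_left {s : Set L} {b : L} (h : ∀ x ∈ s, ⁅x, b⁆ = 0) {a : L}
    (ha : a ∈ LieSubalgebra.lieSpan R L s) : ⁅a, b⁆ = 0 := by
  induction ha using LieSubalgebra.lieSpan_induction with
  | mem x hx => exact h x hx
  | zero => exact zero_lie b
  | add _ _ _ _ hx hy => rw [add_lie, hx, hy, add_zero]
  | smul t _ _ hx => rw [smul_lie, hx, smul_zero]
  | lie _ _ _ _ hx hy => rw [lie_lie, hx, hy, lie_zero, lie_zero, sub_zero]

lemma lie_eq_zero_of_mem_lieSpan {s t : Set L} (h : ∀ x ∈ s, ∀ y ∈ t, ⁅x, y⁆ = 0) {a b : L}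
    (ha : a ∈ LieSubalgebra.lieSpan R L s) (hb : b ∈ LieSubalgebra.lieSpan R L t) :
    ⁅a, b⁆ = 0 := by
  refine lie_eq_zero_of_mem_lieSpan_left (fun x hx => ?_) ha
  rw [← lie_skew, neg_eq_zero]
  exact lie_eq_zero_of_mem_lieSpan_left (fun y hy => by rw [← lie_skew, h x hx y hy, neg_zero]) hb

lemma toSubmodule_iSup_of_pairwise_lie_eq_zero {ι : Type*} (K : ι → LieSubalgebra R L)
    (hK : Pairwise fun i j => ∀ a ∈ K i, ∀ b ∈ K j, ⁅a, b⁆ = 0) :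
    (⨆ i, K i).toSubmodule = ⨆ i, (K i).toSubmodule := by
  set p := ⨆ i, (K i).toSubmodule
  have hlie : Submodule.map₂ (LieModule.toEnd R L L : L →ₗ[R] Module.End R L) p p ≤ p := by
    rw [Submodule.map₂_iSup_left]
    refine iSup_le fun i => ?_
    rw [Submodule.map₂_iSup_right]
    refine iSup_le fun j => Submodule.map₂_le.2 fun a ha b hb => ?_
    change ⁅a, b⁆ ∈ p
    rcases eq_or_ne i j with rfl | hij
    · exact Submodule.mem_iSup_of_mem i ((K i).lie_mem ha hb)
    · exact hK hij a ha b hb ▸ zero_mem p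
  let T : LieSubalgebra R L :=
    { p with lie_mem' := fun ha hb => hlie (Submodule.apply_mem_map₂ _ ha hb) }
  have hKT (i : ι) : K i ≤ T :=
    (LieSubalgebra.toSubmodule_le_toSubmodule _ T).1 (le_iSup (fun i => (K i).toSubmodule) i)
  refine le_antisymm ?_ (iSup_le fun i => ?_)
  · exact (LieSubalgebra.toSubmodule_le_toSubmodule _ T).2 (iSup_le hKT)
  · exact (LieSubalgebra.toSubmodule_le_toSubmodule _ _).2 (le_iSup K i)

end PairwiseCommuting

section PartiallyCommutative

variable {R : Type*} [CommRing R] {X : Type*} {G : SimpleGraph X}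

lemma genSpan_mono {Y Z : Set X} (h : Y ⊆ Z) : genSpan R G Y ≤ genSpan R G Z :=
  LieSubalgebra.lieSpan_mono (Set.image_mono h)

lemma genSpan_iUnion {ι : Type*} (Y : ι → Set X) :
    genSpan R G (⋃ i, Y i) = ⨆ i, genSpan R G (Y i) := by
  rw [genSpan, Set.image_iUnion, LieSubalgebra.span_iUnion]
  rfl

lemma pcGen_lie_pcGen_eq_zero {x y : X} (h : G.Adj x y) : ⁅pcGen R G x, pcGen R G y⁆ = 0 := by
  rw [pcGen, pcGen, ← LieSubmodule.Quotient.mk_bracket, LieSubmodule.Quotient.mk_eq_zero']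
  exact LieSubmodule.subset_lieSpan ⟨x, y, h, rfl⟩

lemma lie_eq_zero_of_mem_genSpan {A B : Set X} (h : ∀ x ∈ A, ∀ y ∈ B, G.Adj x y)
    {a b : PCLieAlgebra R X G} (ha : a ∈ genSpan R G A) (hb : b ∈ genSpan R G B) :
    ⁅a, b⁆ = 0 := by
  refine lie_eq_zero_of_mem_lieSpan ?_ ha hb
  rintro _ ⟨x, hx, rfl⟩ _ ⟨y, hy, rfl⟩
  exact pcGen_lie_pcGen_eq_zero (h x hx y hy)

lemma isSupport_of_add {g a b : PCLieAlgebra R X G} {Y A : Set X} (hg : isSupport R G g Y)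
    (hAY : A ⊆ Y) (ha : a ∈ genSpan R G A) (hb : b ∈ genSpan R G (Y \ A)) (hab : a + b = g) :
    isSupport R G a A := by
  refine ⟨ha, fun Z hZ x hx => ?_⟩
  have hgZ : g ∈ genSpan R G (Z ∪ Y \ A) :=
    hab ▸ add_mem (genSpan_mono Set.subset_union_left hZ) (genSpan_mono Set.subset_union_right hb)
  exact (hg.2 _ hgZ (hAY hx)).resolve_right fun h => h.2 hx

lemma compSet_subset {Y : Set X} (c : (complOn G Y).ConnectedComponent) :
    compSet G Y c ⊆ Y := fun _ hx => hx.1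

lemma iUnion_compSet (Y : Set X) : ⋃ c, compSet G Y c = Y :=
  Set.Subset.antisymm (Set.iUnion_subset compSet_subset) fun _ hy =>
    Set.mem_iUnion.2 ⟨_, hy, rfl⟩

lemma compSet_subset_diff {Y : Set X} {c d : (complOn G Y).ConnectedComponent} (hcd : c ≠ d) :
    compSet G Y d ⊆ Y \ compSet G Y c := by
  rintro x ⟨hxY, rfl⟩
  exact ⟨hxY, fun ⟨_, hxc⟩ => hcd hxc.symm⟩

lemma adj_of_mem_compSet {Y : Set X} {c d : (complOn G Y).ConnectedComponent} (hcd : c ≠ d)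
    {x y : X} (hx : x ∈ compSet G Y c) (hy : y ∈ compSet G Y d) : G.Adj x y := by
  obtain ⟨hxY, rfl⟩ := hx
  obtain ⟨hyY, rfl⟩ := hy
  by_contra hxy
  have hne : x ≠ y := by
    rintro rfl
    exact hcd rfl
  exact hcd (SimpleGraph.ConnectedComponent.connectedComponentMk_eq_of_adj
    (show (complOn G Y).Adj ⟨x, hxY⟩ ⟨y, hyY⟩ from ⟨hne, hxy⟩))

lemma genSpan_toSubmodule_eq_iSup_compSet (Y : Set X) :
    (genSpan R G Y).toSubmodule = ⨆ c, (genSpan R G (compSet G Y c)).toSubmodule := by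
  conv_lhs => rw [← iUnion_compSet (G := G) Y, genSpan_iUnion]
  exact toSubmodule_iSup_of_pairwise_lie_eq_zero _ fun c d hcd _ ha _ hb =>
    lie_eq_zero_of_mem_genSpan (fun _ hx _ hy => adj_of_mem_compSet hcd hx hy) ha hb

end PartiallyCommutative

theorem decomposition_along_components_general
    (R : Type*) [CommRing R] (X : Type*) (G : SimpleGraph X)
    (g : PCLieAlgebra R X G) (Y : Set X) (hY : isSupport R G g Y) :
    ∃ gc : (complOn G Y).ConnectedComponent → PCLieAlgebra R X G,
      g = ∑ᶠ c, gc c ∧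
      ∀ c, gc c ∈ genSpan R G (compSet G Y c) ∧ isSupport R G (gc c) (compSet G Y c) := by
  classical
  have hg : g ∈ (genSpan R G Y).toSubmodule := hY.1
  rw [genSpan_toSubmodule_eq_iSup_compSet, Submodule.mem_iSup_iff_exists_finsupp] at hg
  obtain ⟨f, hf, hfg⟩ := hg
  refine ⟨f, ?_, fun c => ⟨hf c, ?_⟩⟩
  · rw [← hfg, finsum_eq_sum_of_support_subset f (Finsupp.fun_support_eq f).subset]
    rfl
  · have hrest : (f.erase c).sum (fun _ x => x) ∈ genSpan R G (Y \ compSet G Y c) := by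
      refine AddSubmonoidClass.finsuppSum_mem _ _ _ fun d hd => ?_
      have hdc : d ≠ c := by
        rintro rfl
        exact hd Finsupp.erase_same
      rw [Finsupp.erase_ne hdc]
      exact genSpan_mono (compSet_subset_diff hdc.symm) (hf d)
    exact isSupport_of_add hY (compSet_subset c) (hf c) hrest
      (hfg ▸ f.add_sum_erase' c _ fun _ => rfl)

/-- Any `g` with support `Y` decomposes as a sum `g = Σ gᵢ`, where `gᵢ` is supported on
the vertex set of the `i`-th connected component of the complement graph on `Y`. -/
theorem decomposition_along_components
    (R : Type*) [CommRing R] [IsDomain R] (X : Type*) [Fintype X] (G : SimpleGraph X)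
    (g : PCLieAlgebra R X G) (Y : Set X) (hY : isSupport R G g Y) :
    ∃ gc : (complOn G Y).ConnectedComponent → PCLieAlgebra R X G,
      g = ∑ᶠ c, gc c ∧
      ∀ c, gc c ∈ genSpan R G (compSet G Y c) ∧ isSupport R G (gc c) (compSet G Y c) :=
  decomposition_along_components_general R X G g Y hY
end
end
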